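/- arXiv:1303.1290 — 3 statements merged into one kernel-verified Lean document; each statement's English description precedes it below -/
import Mathlib

section
/- Let α be a finite type, k ≥ 2, let G ≤ H be subgroups of Equiv.Perm α, and suppose H = G(f) for some k-valued boolean function f on α. Suppose there is a subset S of α that is regular in H and such that f x = f x_S for every x : α → Bool whose number of true coordinates equals the cardinality of S, where x_S : α → Bool is the characteristic function of S. Then G is k-representable. -/
/-- The symmetry (invariance) group of a function `f` on boolean tuples indexed by `α`:
all permutations `σ` with `f (x ∘ σ) = f x` for every `x : α → Bool`. -/
def symmGroup {α V : Type*} (f : (α → Bool) → V) : Subgroup (Equiv.Perm α) where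
  carrier := {σ | ∀ x : α → Bool, f (x ∘ σ) = f x}
  one_mem' := by intro x; simp
  mul_mem' := by
    intro a b ha hb x
    have h : x ∘ ⇑(a * b) = (x ∘ ⇑a) ∘ ⇑b := by
      ext y; simp [Equiv.Perm.mul_apply, Function.comp]
    rw [h, hb, ha]
  inv_mem' := by
    intro a ha x
    have h := ha (x ∘ ⇑a⁻¹)
    have h2 : (x ∘ ⇑a⁻¹) ∘ ⇑a = x := by
      ext y; simp [Function.comp]
    rw [h2] at h
    exact h.symm

/-- A subgroup of `Equiv.Perm α` is `k`-representable if it is the symmetry group of a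
`k`-valued boolean function. -/
def Representable (k : ℕ) {α : Type*} (G : Subgroup (Equiv.Perm α)) : Prop :=
  ∃ f : (α → Bool) → Fin k, G = symmGroup f

/-- The direct sum of two permutation groups, acting on the disjoint union. -/
def directSum {α β : Type*} (G : Subgroup (Equiv.Perm α)) (H : Subgroup (Equiv.Perm β)) :
    Subgroup (Equiv.Perm (α ⊕ β)) :=
  (G.prod H).map (Equiv.Perm.sumCongrHom α β)

/-- A permutation group is regular if it is transitive and only the identity has a fixed point. -/
def IsRegularPermGroup {α : Type*} (G : Subgroup (Equiv.Perm α)) : Prop :=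
  (∀ a b : α, ∃ σ ∈ G, σ a = b) ∧ ∀ σ ∈ G, ∀ a : α, σ a = a → σ = 1

/-- `B` is a direct sum of regular groups: under some identification of `α` with a finite
sigma type, `B` consists exactly of the permutations preserving each block and acting on
block `i` as an element of a fixed regular group `G i`. -/
def IsDirectSumOfRegular {α : Type*} (B : Subgroup (Equiv.Perm α)) : Prop :=
  ∃ (ι : Type) (_ : Fintype ι) (β : ι → Type) (_ : ∀ i, Fintype (β i))
    (e : α ≃ Σ i, β i) (G : ∀ i, Subgroup (Equiv.Perm (β i))),
    (∀ i, IsRegularPermGroup (G i)) ∧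
    ∀ π : Equiv.Perm α, π ∈ B ↔
      ∃ g : ∀ i, Equiv.Perm (β i), (∀ i, g i ∈ G i) ∧
        ∀ a : α, e (π a) = ⟨(e a).1, g (e a).1 (e a).2⟩

/-- `C_n`, the cyclic group generated by the cycle `0 ↦ 1 ↦ ⋯ ↦ n-1 ↦ 0`. -/
def Cgroup (n : ℕ) : Subgroup (Equiv.Perm (Fin n)) := Subgroup.zpowers (finRotate n)

/-- The Klein four-group `K₄ ≤ S₄` generated by `(0 1)(2 3)` and `(0 2)(1 3)`. -/
def K4 : Subgroup (Equiv.Perm (Fin 4)) :=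
  Subgroup.closure {Equiv.swap 0 1 * Equiv.swap 2 3, Equiv.swap 0 2 * Equiv.swap 1 3}

/-- Permutation isomorphism of permutation groups. -/
def PermIso {α β : Type*} (G : Subgroup (Equiv.Perm α)) (H : Subgroup (Equiv.Perm β)) : Prop :=
  ∃ e : α ≃ β, ∀ σ : Equiv.Perm α, σ ∈ G ↔ e.permCongr σ ∈ H

/-- A set `S` is regular in `H` if the identity is the only element of `H` mapping `S` to itself. -/
def IsRegularSet {α : Type*} (S : Set α) (H : Subgroup (Equiv.Perm α)) : Prop :=
  ∀ σ ∈ H, ⇑σ '' S = S → σ = 1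

/-- The subdirect sum `G/M ⊕_φ H/N`: all `Equiv.sumCongr σ τ` with `σ ∈ G`, `τ ∈ H` and
`φ (σ M) = τ N`. -/
def subdirectSum {α β : Type*} (G : Subgroup (Equiv.Perm α)) (H : Subgroup (Equiv.Perm β))
    (M : Subgroup G) [M.Normal] (N : Subgroup H) [N.Normal]
    (φ : G ⧸ M ≃* H ⧸ N) : Subgroup (Equiv.Perm (α ⊕ β)) where
  carrier := {π | ∃ (σ : G) (τ : H),
    φ (QuotientGroup.mk σ) = QuotientGroup.mk τ ∧
    π = Equiv.Perm.sumCongrHom α β ((σ : Equiv.Perm α), (τ : Equiv.Perm β))}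
  one_mem' := ⟨1, 1, by simp, by simp⟩
  mul_mem' := by
    rintro _ _ ⟨σ₁, τ₁, h1, rfl⟩ ⟨σ₂, τ₂, h2, rfl⟩
    refine ⟨σ₁ * σ₂, τ₁ * τ₂, ?_, ?_⟩
    · rw [QuotientGroup.mk_mul, QuotientGroup.mk_mul, map_mul, h1, h2]
    · rw [← map_mul]
      rfl
  inv_mem' := by
    rintro _ ⟨σ, τ, h, rfl⟩
    refine ⟨σ⁻¹, τ⁻¹, ?_, ?_⟩
    · rw [QuotientGroup.mk_inv, QuotientGroup.mk_inv, map_inv, h]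
    · rw [← map_inv]
      rfl


/-!
Let `χ` be the characteristic function of `S`. Modify `f` on the level set `{x | weight x = |S|}`,
where `f` is constant: send the `G`-orbit of `χ` to one value and the rest of the level set to
another. Every element of `G` preserves the new function `g`. Conversely, a symmetry `σ` of `g`
preserves the level set and `f` everywhere else, so `σ ∈ H`; and it maps `χ ∘ σ⁻¹` (a point of
the level set) to `χ`, so `χ ∘ σ⁻¹ = χ ∘ τ` for some `τ ∈ G`. Then `τ * σ ∈ H` fixes `χ`, i.e.
maps `S` onto itself, so regularity of `S` gives `σ = τ⁻¹ ∈ G`.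
-/

open Equiv Function

theorem mem_symmGroup_iff {α V : Type*} {f : (α → Bool) → V} {σ : Perm α} :
    σ ∈ symmGroup f ↔ ∀ x, f (x ∘ σ) = f x :=
  Iff.rfl

section Refinement

variable {α V : Type*} {f : (α → Bool) → V} {C : Set (α → Bool)} {G : Subgroup (Perm α)}
  {x₀ x : α → Bool} {σ : Perm α} {a b : V}

def compOrbit (G : Subgroup (Perm α)) (x₀ : α → Bool) : Set (α → Bool) :=
  {x | ∃ τ ∈ G, x₀ ∘ τ = x}

theorem mem_compOrbit_self : x₀ ∈ compOrbit G x₀ :=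
  ⟨1, G.one_mem, rfl⟩

theorem comp_mem_compOrbit_iff (hσ : σ ∈ G) : x ∘ σ ∈ compOrbit G x₀ ↔ x ∈ compOrbit G x₀ := by
  constructor
  · rintro ⟨τ, hτ, hx⟩
    refine ⟨τ * σ⁻¹, G.mul_mem hτ (G.inv_mem hσ), ?_⟩
    rw [Perm.coe_mul, ← comp_assoc, hx, comp_assoc, ← Perm.coe_mul, mul_inv_cancel,
      Perm.coe_one, comp_id]
  · rintro ⟨τ, hτ, rfl⟩
    exact ⟨τ * σ, G.mul_mem hτ hσ, rfl⟩

theorem compOrbit_subset (hC : ∀ (σ : Perm α) x, x ∘ σ ∈ C ↔ x ∈ C) (hx₀ : x₀ ∈ C) :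
    compOrbit G x₀ ⊆ C := by
  rintro _ ⟨τ, -, rfl⟩
  exact (hC τ x₀).2 hx₀

open Classical in
noncomputable def refineByOrbit (f : (α → Bool) → V) (C : Set (α → Bool))
    (G : Subgroup (Perm α)) (x₀ : α → Bool) (a b : V) : (α → Bool) → V :=
  fun x => if x ∈ compOrbit G x₀ then a else if x ∈ C then b else f x

theorem refineByOrbit_of_notMem (hOC : compOrbit G x₀ ⊆ C) (hx : x ∉ C) :
    refineByOrbit f C G x₀ a b x = f x := by
  simp only [refineByOrbit, if_neg hx, if_neg fun h => hx (hOC h)]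

theorem le_symmGroup_refineByOrbit (hG : G ≤ symmGroup f)
    (hC : ∀ (σ : Perm α) x, x ∘ σ ∈ C ↔ x ∈ C) :
    G ≤ symmGroup (refineByOrbit f C G x₀ a b) := by
  intro σ hσ x
  -- `simp` has to re-synthesize the `Decidable` instances of the rewritten `if` conditions
  classical
  simp only [refineByOrbit, comp_mem_compOrbit_iff hσ, hC σ x, mem_symmGroup_iff.1 (hG hσ) x]

theorem symmGroup_refineByOrbit_le (hC : ∀ (σ : Perm α) x, x ∘ σ ∈ C ↔ x ∈ C) (hx₀ : x₀ ∈ C)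
    (hfC : ∀ x ∈ C, f x = f x₀) :
    symmGroup (refineByOrbit f C G x₀ a b) ≤ symmGroup f := by
  intro σ hσ x
  by_cases hx : x ∈ C
  · rw [hfC x hx, hfC _ ((hC σ x).2 hx)]
  · have hOC := compOrbit_subset (G := G) hC hx₀
    have hσx := mem_symmGroup_iff.1 hσ x
    rwa [refineByOrbit_of_notMem hOC hx, refineByOrbit_of_notMem hOC (mt (hC σ x).1 hx)] at hσx

theorem comp_inv_mem_compOrbit (hC : ∀ (σ : Perm α) x, x ∘ σ ∈ C ↔ x ∈ C) (hx₀ : x₀ ∈ C)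
    (hab : a ≠ b) (hσ : σ ∈ symmGroup (refineByOrbit f C G x₀ a b)) :
    x₀ ∘ ⇑σ⁻¹ ∈ compOrbit G x₀ := by
  by_contra hout
  have hσx := mem_symmGroup_iff.1 hσ (x₀ ∘ ⇑σ⁻¹)
  rw [comp_assoc, ← Perm.coe_mul, inv_mul_cancel, Perm.coe_one, comp_id] at hσx
  simp only [refineByOrbit, if_pos mem_compOrbit_self, if_neg hout, if_pos ((hC _ _).2 hx₀)]
    at hσx
  exact hab hσx

theorem eq_symmGroup_refineByOrbit (hG : G ≤ symmGroup f)
    (hC : ∀ (σ : Perm α) x, x ∘ σ ∈ C ↔ x ∈ C) (hx₀ : x₀ ∈ C) (hfC : ∀ x ∈ C, f x = f x₀)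
    (hstab : ∀ σ ∈ symmGroup f, x₀ ∘ σ = x₀ → σ = 1) (hab : a ≠ b) :
    G = symmGroup (refineByOrbit f C G x₀ a b) := by
  refine le_antisymm (le_symmGroup_refineByOrbit hG hC) fun σ hσ => ?_
  obtain ⟨τ, hτ, hτσ⟩ := comp_inv_mem_compOrbit hC hx₀ hab hσ
  have hτσ_one : τ * σ = 1 := by
    refine hstab _ (mul_mem (hG hτ) (symmGroup_refineByOrbit_le hC hx₀ hfC hσ)) ?_
    rw [Perm.coe_mul, ← comp_assoc, hτσ, comp_assoc, ← Perm.coe_mul, inv_mul_cancel,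
      Perm.coe_one, comp_id]
  rw [eq_inv_of_mul_eq_one_right hτσ_one]
  exact G.inv_mem hτ

end Refinement

section Weight

variable {α : Type*} [Fintype α]

def weight (x : α → Bool) : ℕ :=
  (Finset.univ.filter fun a => x a = true).card

theorem weight_comp_perm (x : α → Bool) (σ : Perm α) : weight (x ∘ σ) = weight x :=
  Finset.card_equiv σ (by simp)

theorem weight_decide_mem [DecidableEq α] (S : Finset α) :
    weight (fun a => decide (a ∈ S)) = S.card := by
  simp [weight]

end Weight

theorem IsRegularSet.eq_one_of_comp_eq {α : Type*} [DecidableEq α] {S : Finset α}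
    {H : Subgroup (Perm α)} (hS : IsRegularSet (↑S) H) {σ : Perm α} (hσ : σ ∈ H)
    (h : (fun a => decide (a ∈ S)) ∘ σ = fun a => decide (a ∈ S)) : σ = 1 := by
  have hpre : ⇑σ ⁻¹' ↑S = (↑S : Set α) := Set.ext fun a => by simpa using congrFun h a
  refine hS σ hσ ?_
  rw [Equiv.image_eq_preimage_symm, ← hpre, Equiv.symm_preimage_preimage, hpre]

theorem representable_of_regular_set
    {α : Type*} [Fintype α] [DecidableEq α] (k : ℕ) (hk : 2 ≤ k)
    (G H : Subgroup (Equiv.Perm α)) (hGH : G ≤ H)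
    (f : (α → Bool) → Fin k) (hH : H = symmGroup f)
    (S : Finset α) (hreg : IsRegularSet (↑S) H)
    (hf : ∀ x : α → Bool,
      (Finset.univ.filter fun a => x a = true).card = S.card →
      f x = f (fun a => decide (a ∈ S))) :
    Representable k G := by
  subst hH
  have hC : ∀ (σ : Perm α) x, x ∘ σ ∈ {x | weight x = S.card} ↔ x ∈ {x | weight x = S.card} :=
    fun σ x => by simp only [Set.mem_ofPred_eq, weight_comp_perm]
  exact ⟨refineByOrbit f {x | weight x = S.card} G (fun a => decide (a ∈ S))
      ⟨0, by omega⟩ ⟨1, by omega⟩,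
    eq_symmGroup_refineByOrbit hGH hC (weight_decide_mem S) hf
      (fun _ hσ => hreg.eq_one_of_comp_eq hσ) (by simp)⟩
end

section
/- Let β be a finite type with at least 2 elements and let H be a subgroup of Equiv.Perm β such that either H is 2-representable or H is permutation isomorphic to K_4. Suppose the direct sum B = C_2 ⊕ H, a subgroup of Equiv.Perm (Fin 2 ⊕ β), is a direct sum of regular groups. Then every subgroup A of B is 2-representable. -/
/-!
The two points of `Fin 2` can carry one extra bit, which lets `C₂ ⊕ H` use a 3-valued function `f`
with symmetry group `H`: a 2-valued one in the representable case, and for `K₄` the function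
sending the vectors of `{0,1}, {2,3}` to `1`, those of `{0,2}, {1,3}` to `2` and everything else
to `0`. No point vector of `β` may lie in level `2`, or it could be confused with the point
vectors of `Fin 2`.
For `A ≤ B = C₂ ⊕ H`, take the family of boolean vectors made of the two point vectors of `Fin 2`,
the vectors that are constant `b` on `Fin 2` and whose `β`-part lies in level `1` (`b = true`) or
`2` (`b = false`) of `f`, and the `A`-orbit of the indicator of a transversal `P` of the
`B`-orbits containing `inl 0`. A symmetry of this family fixes `Fin 2` setwise because of the
point vectors, hence lies in `B` because of the level vectors, and moves `P` to some `g • P` with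
`g ∈ A`. Since `B` is a direct sum of regular groups, an element of `B` fixing `P` is trivial, so
the symmetry is `g`.
-/

open Equiv Function Set

section symmGroup

variable {α β : Type*}

lemma mem_symmGroup {V : Type*} {f : (α → Bool) → V} {σ : Perm α} :
    σ ∈ symmGroup f ↔ ∀ x, f (x ∘ σ) = f x :=
  Iff.rfl

lemma symmGroup_comp_of_injective {V W : Type*} (f : (α → Bool) → V) {g : V → W}
    (hg : Injective g) : symmGroup (g ∘ f) = symmGroup f := by
  ext σ
  simp only [mem_symmGroup, comp_apply, hg.eq_iff]

lemma mem_symmGroup_mem_iff {𝒳 : Set (α → Bool)} {σ : Perm α} :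
    σ ∈ symmGroup (· ∈ 𝒳) ↔ ∀ x, x ∘ σ ∈ 𝒳 ↔ x ∈ 𝒳 := by
  simp only [mem_symmGroup, eq_iff_iff]

lemma representable_two_symmGroup_mem (𝒳 : Set (α → Bool)) :
    Representable 2 (symmGroup (· ∈ 𝒳)) := by
  classical
  let g : Prop → Fin 2 := fun P => if P then 1 else 0
  have hg : Injective g := by
    intro P Q h
    by_cases hP : P <;> by_cases hQ : Q <;> simp_all [g]
  exact ⟨g ∘ (· ∈ 𝒳), (symmGroup_comp_of_injective _ hg).symm⟩

lemma le_symmGroup_mem_of_forall {G : Subgroup (Perm α)} {𝒳 : Set (α → Bool)}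
    (h : ∀ g ∈ G, ∀ x ∈ 𝒳, x ∘ g ∈ 𝒳) : G ≤ symmGroup (· ∈ 𝒳) := by
  refine fun g hg => mem_symmGroup_mem_iff.mpr fun x => ⟨fun hx => ?_, h g hg x⟩
  simpa [comp_assoc] using h g⁻¹ (inv_mem hg) _ hx

lemma eq_symmGroup_comp_of_permCongr {G : Subgroup (Perm α)} {H : Subgroup (Perm β)}
    (e : α ≃ β) (he : ∀ σ, σ ∈ G ↔ e.permCongr σ ∈ H) {V : Type*} {f : (β → Bool) → V}
    (hf : H = symmGroup f) : G = symmGroup fun w => f (w ∘ e.symm) := by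
  ext σ
  have hσ : ⇑(e.permCongr σ) = e ∘ σ ∘ e.symm := rfl
  rw [he, hf, mem_symmGroup, mem_symmGroup, hσ]
  constructor
  · intro h w
    simpa [comp_def] using h (w ∘ e.symm)
  · intro h v
    simpa [comp_def] using h (v ∘ e)

end symmGroup

section pointVec

variable {α β : Type*} [DecidableEq α] [DecidableEq β]

def pointVec (a : α) : α → Bool := fun b => decide (b = a)

lemma pointVec_injective : Injective (pointVec : α → α → Bool) := fun a b h => by
  simpa [pointVec] using congrFun h a

lemma pointVec_comp_equiv (e : α ≃ β) (b : β) : pointVec b ∘ e = pointVec (e.symm b) := by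
  ext a
  simp [pointVec, eq_symm_apply]

lemma comp_ne_pointVec {x : α → Bool} {a b : α} (hab : a ≠ b) (ha : x a = true)
    (hb : x b = true) (σ : Perm α) (c : α) : x ∘ σ ≠ pointVec c := by
  intro h
  have hac := congrFun h (σ⁻¹ a)
  have hbc := congrFun h (σ⁻¹ b)
  simp [pointVec, ha, hb] at hac hbc
  exact hab (σ⁻¹.injective (hac.trans hbc.symm))

end pointVec

section directSum

variable {α β : Type*} {G : Subgroup (Perm α)} {H : Subgroup (Perm β)}

lemma sumCongr_mem_directSum_iff {σ : Perm α} {τ : Perm β} :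
    Perm.sumCongr σ τ ∈ directSum G H ↔ σ ∈ G ∧ τ ∈ H :=
  show Perm.sumCongrHom α β (σ, τ) ∈ _ ↔ _ from
  (Subgroup.mem_map_iff_mem Perm.sumCongrHom_injective).trans Subgroup.mem_prod

lemma exists_sumCongr_of_mem_directSum {π : Perm (α ⊕ β)} (h : π ∈ directSum G H) :
    ∃ σ ∈ G, ∃ τ ∈ H, π = Perm.sumCongr σ τ := by
  obtain ⟨⟨σ, τ⟩, hστ, rfl⟩ := Subgroup.mem_map.mp h
  exact ⟨σ, hστ.1, τ, hστ.2, rfl⟩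

lemma comp_inl_zero_eq_inl_one_iff {x : Fin 2 ⊕ β → Bool} {π : Perm (Fin 2 ⊕ β)}
    (hπ : π ∈ (Perm.sumCongrHom (Fin 2) β).range) :
    (x ∘ π) (.inl 0) = (x ∘ π) (.inl 1) ↔ x (.inl 0) = x (.inl 1) := by
  obtain ⟨⟨σ, τ⟩, rfl⟩ := hπ
  have hFin2 : ∀ σ : Perm (Fin 2), σ 0 = 0 ∧ σ 1 = 1 ∨ σ 0 = 1 ∧ σ 1 = 0 := by decide
  rcases hFin2 σ with ⟨h0, h1⟩ | ⟨h0, h1⟩ <;> simp [h0, h1, eq_comm]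

lemma Cgroup_two_eq_top : Cgroup 2 = ⊤ := by
  have hFin2 : ∀ σ : Perm (Fin 2), σ = 1 ∨ σ = finRotate 2 := by decide
  refine eq_top_iff.mpr fun σ _ => ?_
  rcases hFin2 σ with rfl | rfl
  exacts [one_mem _, Subgroup.mem_zpowers _]

end directSum

def k4Code (v : Fin 4 → Bool) : Fin 3 :=
  if v = ![true, true, false, false] ∨ v = ![false, false, true, true] then 1
  else if v = ![true, false, true, false] ∨ v = ![false, true, false, true] then 2 else 0

lemma K4_eq_symmGroup_k4Code : K4 = symmGroup k4Code := by
  have hgen : ∀ ρ ∈ ({Equiv.swap 0 1 * Equiv.swap 2 3, Equiv.swap 0 2 * Equiv.swap 1 3} :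
      Set (Perm (Fin 4))), ∀ v, k4Code (v ∘ ρ) = k4Code v := by decide
  have hsymm : ∀ ρ : Perm (Fin 4), (∀ v, k4Code (v ∘ ρ) = k4Code v) →
      ρ = 1 ∨ ρ = Equiv.swap 0 1 * Equiv.swap 2 3 ∨ ρ = Equiv.swap 0 2 * Equiv.swap 1 3 ∨
        ρ = Equiv.swap 0 1 * Equiv.swap 2 3 * (Equiv.swap 0 2 * Equiv.swap 1 3) := by decide
  refine le_antisymm ((Subgroup.closure_le _).mpr hgen) fun ρ hρ => ?_
  have ha : Equiv.swap 0 1 * Equiv.swap 2 3 ∈ K4 := Subgroup.subset_closure (by simp)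
  have hb : Equiv.swap 0 2 * Equiv.swap 1 3 ∈ K4 := Subgroup.subset_closure (by simp)
  rcases hsymm ρ hρ with rfl | rfl | rfl | rfl
  exacts [one_mem _, ha, hb, mul_mem ha hb]

lemma k4Code_pointVec_ne_two : ∀ c, k4Code (pointVec c) ≠ 2 := by decide

section codes

variable {β : Type*} [DecidableEq β] {H : Subgroup (Perm β)}

lemma exists_code_of_representable (hH : Representable 2 H) :
    ∃ f : (β → Bool) → Fin 3, H = symmGroup f ∧ ∀ y, f (pointVec y) ≠ 2 := by
  obtain ⟨f, rfl⟩ := hH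
  refine ⟨Fin.castSucc ∘ f, (symmGroup_comp_of_injective f (Fin.castSucc_injective 2)).symm,
    fun y => (Fin.castSucc_lt_last (f (pointVec y))).ne⟩

lemma exists_code_of_permIso_K4 (hH : PermIso H K4) :
    ∃ f : (β → Bool) → Fin 3, H = symmGroup f ∧ ∀ y, f (pointVec y) ≠ 2 := by
  obtain ⟨e, he⟩ := hH
  refine ⟨fun w => k4Code (w ∘ e.symm),
    eq_symmGroup_comp_of_permCongr e he K4_eq_symmGroup_k4Code, fun y => ?_⟩
  show k4Code (pointVec y ∘ e.symm) ≠ 2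
  rw [pointVec_comp_equiv, Equiv.symm_symm]
  exact k4Code_pointVec_ne_two (e y)

end codes

section transversal

variable {α : Type*}

lemma Subgroup.exists_orbit_transversal (B : Subgroup (Perm α)) (a₀ : α) :
    ∃ P : Set α, a₀ ∈ P ∧ (∀ a, ∃ π ∈ B, π a ∈ P) ∧ ∀ π ∈ B, ∀ a ∈ P, π a ∈ P → π a = a := by
  classical
  let q : α → MulAction.orbitRel.Quotient B α := Quotient.mk _
  let rep : MulAction.orbitRel.Quotient B α → α := fun c => if c = q a₀ then a₀ else c.out
  have hrep : ∀ c, q (rep c) = c := by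
    intro c
    by_cases h : c = q a₀
    · subst h
      simp [rep]
    · simp only [rep, if_neg h, q, Quotient.out_eq]
  have hq : ∀ π ∈ B, ∀ a, q (π a) = q a := fun π hπ a =>
    Quotient.sound (MulAction.mem_orbit a (⟨π, hπ⟩ : B))
  refine ⟨{a | rep (q a) = a}, if_pos rfl, fun a => ?_, fun π hπ a ha hπa => ?_⟩
  · obtain ⟨⟨π, hπ⟩, hπa⟩ := MulAction.mem_orbit_iff.mp (Quotient.exact (hrep (q a)))
    refine ⟨π, hπ, ?_⟩
    change rep (q (π a)) = π a
    change π a = rep (q a) at hπa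
    rw [hπa, hrep]
  · calc π a = rep (q (π a)) := hπa.symm
      _ = a := by rw [hq π hπ]; exact ha

lemma IsDirectSumOfRegular.eq_one_of_mapsTo_transversal {B : Subgroup (Perm α)}
    (hB : IsDirectSumOfRegular B) {P : Set α} (hcover : ∀ a, ∃ π ∈ B, π a ∈ P)
    (hunique : ∀ π ∈ B, ∀ a ∈ P, π a ∈ P → π a = a)
    {σ : Perm α} (hσ : σ ∈ B) (hmaps : MapsTo σ P P) : σ = 1 := by
  obtain ⟨ι, -, γ, -, e, G, hreg, hmem⟩ := hB
  obtain ⟨g, hg, hσe⟩ := (hmem σ).1 hσ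
  ext a
  obtain ⟨π, hπ, hπa⟩ := hcover a
  obtain ⟨_, -, hπe⟩ := (hmem π).1 hπ
  -- `σ` fixes `π a ∈ P`, which lies in the block of `a`; regularity kills that block component.
  have hfix : e (σ (π a)) = e (π a) := by rw [hunique σ hσ _ hπa (hmaps hπa)]
  rw [hσe] at hfix
  have hg1 : g (e (π a)).1 = 1 :=
    (hreg _).2 _ (hg _) _ (eq_of_heq (Sigma.ext_iff.mp hfix).2)
  rw [hπe a] at hg1
  apply e.injective
  rw [hσe, hg1]
  rfl

end transversal

section levelFamily

variable {β : Type*} {f : (β → Bool) → Fin 3}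

def levelFamily (f : (β → Bool) → Fin 3) : Set (Fin 2 ⊕ β → Bool) :=
  {x | ∃ b, x ∘ Sum.inl = const _ b ∧ f (x ∘ Sum.inr) = if b then 1 else 2}

lemma elim_const_mem_levelFamily_iff (b : Bool) (w : β → Bool) :
    Sum.elim (const _ b) w ∈ levelFamily f ↔ f w = if b then 1 else 2 := by
  simp only [levelFamily, mem_ofPred_eq, Sum.elim_comp_inl, Sum.elim_comp_inr, const_inj]
  exact ⟨fun ⟨_, hb, hw⟩ => hb ▸ hw, fun hw => ⟨b, rfl, hw⟩⟩

lemma Equiv.Perm.comp_eq_const_iff {γ δ : Type*} (y : γ → δ) (σ : Perm γ) (b : δ) :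
    y ∘ σ = const _ b ↔ y = const _ b := by
  refine ⟨fun h => ?_, by rintro rfl; rfl⟩
  ext k
  simpa using congrFun h (σ⁻¹ k)

lemma sumCongr_mem_symmGroup_levelFamily_iff {σ : Perm (Fin 2)} {τ : Perm β} :
    Perm.sumCongr σ τ ∈ symmGroup (· ∈ levelFamily f) ↔ τ ∈ symmGroup f := by
  constructor
  · intro h w
    have hlevel : ∀ b : Bool, f (w ∘ τ) = (if b then 1 else 2) ↔ f w = if b then 1 else 2 := by
      intro b
      have hcomp : Sum.elim (const _ b) w ∘ Perm.sumCongr σ τ = Sum.elim (const _ b) (w ∘ τ) := by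
        ext (k | y) <;> rfl
      rw [← elim_const_mem_levelFamily_iff, ← elim_const_mem_levelFamily_iff, ← hcomp]
      exact mem_symmGroup_mem_iff.mp h _
    have hFin3 : ∀ u v : Fin 3, (u = 1 ↔ v = 1) → (u = 2 ↔ v = 2) → u = v := by decide
    exact hFin3 _ _ (hlevel true) (hlevel false)
  · intro hτ
    refine mem_symmGroup_mem_iff.mpr fun x => ?_
    change (∃ b, (x ∘ Sum.inl) ∘ σ = _ ∧ f ((x ∘ Sum.inr) ∘ τ) = _) ↔ _
    simp only [Perm.comp_eq_const_iff, hτ (x ∘ Sum.inr)]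
    rfl

lemma inl_zero_eq_inl_one_of_mem_levelFamily {x : Fin 2 ⊕ β → Bool} (hx : x ∈ levelFamily f) :
    x (.inl 0) = x (.inl 1) := by
  obtain ⟨b, hb, -⟩ := hx
  exact (congrFun hb 0).trans (congrFun hb 1).symm

variable [DecidableEq β]

lemma pointVec_inl_zero_ne_inl_one (k : Fin 2) :
    pointVec (Sum.inl k : Fin 2 ⊕ β) (.inl 0) ≠ pointVec (Sum.inl k : Fin 2 ⊕ β) (.inl 1) := by
  fin_cases k <;> simp [pointVec]

lemma pointVec_not_mem_levelFamily (hf : ∀ y, f (pointVec y) ≠ 2) (a : Fin 2 ⊕ β) :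
    pointVec a ∉ levelFamily f := by
  intro ha
  rcases a with k | y
  · exact pointVec_inl_zero_ne_inl_one k (inl_zero_eq_inl_one_of_mem_levelFamily ha)
  · obtain ⟨b, hb, hfb⟩ := ha
    obtain rfl : b = false := by simpa [pointVec] using (congrFun hb 0).symm
    have hy : pointVec (.inr y : Fin 2 ⊕ β) ∘ Sum.inr = pointVec y := by
      ext
      simp [pointVec]
    exact hf y (by simpa [hy] using hfb)

end levelFamily

section reprFamily

variable {β : Type*} [DecidableEq β] {f : (β → Bool) → Fin 3} {p : Fin 2 ⊕ β → Bool}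
  {A : Subgroup (Perm (Fin 2 ⊕ β))}

def reprFamily (A : Subgroup (Perm (Fin 2 ⊕ β))) (f : (β → Bool) → Fin 3)
    (p : Fin 2 ⊕ β → Bool) : Set (Fin 2 ⊕ β → Bool) :=
  range (fun k => pointVec (.inl k)) ∪ levelFamily f ∪ {x | ∃ g ∈ A, x = p ∘ g}

lemma le_symmGroup_reprFamily (hA : A ≤ directSum ⊤ (symmGroup f)) :
    A ≤ symmGroup (· ∈ reprFamily A f p) := by
  refine le_symmGroup_mem_of_forall fun g hg x hx => ?_
  obtain ⟨σ, -, τ, hτ, rfl⟩ := exists_sumCongr_of_mem_directSum (hA hg)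
  rcases hx with (⟨k, rfl⟩ | hx) | ⟨g', hg', rfl⟩
  · refine Or.inl (Or.inl ⟨σ⁻¹ k, ?_⟩)
    rw [pointVec_comp_equiv, ← Perm.inv_def, Perm.sumCongr_inv]
    rfl
  · exact Or.inl (Or.inr
      ((mem_symmGroup_mem_iff.mp (sumCongr_mem_symmGroup_levelFamily_iff.mpr hτ) x).mpr hx))
  · exact Or.inr ⟨g' * Perm.sumCongr σ τ, mul_mem hg' hg, rfl⟩

variable {z : β} (hf : ∀ y, f (pointVec y) ≠ 2) (hp0 : p (.inl 0) = true)
  (hpz : p (.inr z) = true)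
include hf hp0 hpz

lemma mapsTo_inl_of_mem_symmGroup_reprFamily {σ : Perm (Fin 2 ⊕ β)}
    (hσ : σ ∈ symmGroup (· ∈ reprFamily A f p)) : MapsTo ⇑σ⁻¹ (range .inl) (range .inl) := by
  rintro _ ⟨k, rfl⟩
  have hmem : pointVec (σ⁻¹ (.inl k)) ∈ reprFamily A f p := by
    rw [Perm.inv_def, ← pointVec_comp_equiv]
    exact (mem_symmGroup_mem_iff.mp hσ _).mpr (Or.inl (Or.inl ⟨k, rfl⟩))
  rcases hmem with (⟨k', hk'⟩ | hlevel) | ⟨g, -, hg⟩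
  · exact ⟨k', pointVec_injective hk'⟩
  · exact absurd hlevel (pointVec_not_mem_levelFamily hf _)
  · exact absurd hg.symm (comp_ne_pointVec Sum.inl_ne_inr hp0 hpz g _)

variable [Finite β] (hp1 : p (.inl 1) = false) (hA : A ≤ directSum ⊤ (symmGroup f))
include hp1 hA

lemma mem_directSum_of_mem_symmGroup_reprFamily {σ : Perm (Fin 2 ⊕ β)}
    (hσ : σ ∈ symmGroup (· ∈ reprFamily A f p)) : σ ∈ directSum ⊤ (symmGroup f) := by
  have hlevel : symmGroup (· ∈ reprFamily A f p) ⊓ (Perm.sumCongrHom _ _).range ≤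
      symmGroup (· ∈ levelFamily f) := by
    refine le_symmGroup_mem_of_forall fun g ⟨hgS, hgR⟩ x hx => ?_
    have hconst : (x ∘ g) (.inl 0) = (x ∘ g) (.inl 1) :=
      (comp_inl_zero_eq_inl_one_iff hgR).mpr (inl_zero_eq_inl_one_of_mem_levelFamily hx)
    rcases (mem_symmGroup_mem_iff.mp hgS x).mpr (Or.inl (Or.inr hx)) with
      (⟨k, hk⟩ | hxg) | ⟨g', hg', hg'x⟩
    · exact absurd (hk ▸ hconst) (pointVec_inl_zero_ne_inl_one k)
    · exact hxg
    · rw [hg'x, comp_inl_zero_eq_inl_one_iff (Subgroup.map_le_range _ _ (hA hg'))] at hconst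
      simp [hp0, hp1] at hconst
  obtain ⟨⟨σ₀, τ₀⟩, rfl⟩ := Perm.mem_sumCongrHom_range_of_perm_mapsTo_inl
    (by simpa only [inv_inv] using mapsTo_inl_of_mem_symmGroup_reprFamily hf hp0 hpz (inv_mem hσ))
  exact sumCongr_mem_directSum_iff.mpr ⟨Subgroup.mem_top _,
    sumCongr_mem_symmGroup_levelFamily_iff.mp (hlevel ⟨hσ, ⟨_, rfl⟩⟩)⟩

theorem symmGroup_reprFamily_eq
    (hreg : ∀ π ∈ directSum ⊤ (symmGroup f), p ∘ π = p → π = 1) :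
    symmGroup (· ∈ reprFamily A f p) = A := by
  refine le_antisymm (fun σ hσ => ?_) (le_symmGroup_reprFamily hA)
  have hσB := mem_directSum_of_mem_symmGroup_reprFamily hf hp0 hpz hp1 hA hσ
  rcases (mem_symmGroup_mem_iff.mp (inv_mem hσ) p).mpr (Or.inr ⟨1, one_mem A, rfl⟩) with
    (⟨k, hk⟩ | hlevel) | ⟨g, hg, hgσ⟩
  · exact absurd hk.symm (comp_ne_pointVec Sum.inl_ne_inr hp0 hpz _ _)
  · have hconst := inl_zero_eq_inl_one_of_mem_levelFamily hlevel
    rw [comp_inl_zero_eq_inl_one_iff (Subgroup.map_le_range _ _ (inv_mem hσB))] at hconst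
    simp [hp0, hp1] at hconst
  · have hgσ1 : g * σ = 1 := by
      refine hreg _ (mul_mem (hA hg) hσB) ?_
      calc p ∘ ⇑(g * σ) = (p ∘ ⇑σ⁻¹) ∘ σ := by rw [hgσ]; rfl
        _ = p := by ext; simp
    rw [eq_inv_of_mul_eq_one_right hgσ1]
    exact inv_mem hg

end reprFamily

theorem subgroup_of_c2_directSum_representable
    {β : Type*} [Fintype β] (hβ : 2 ≤ Fintype.card β)
    (H : Subgroup (Equiv.Perm β))
    (hH : Representable 2 H ∨ PermIso H K4)
    (hB : IsDirectSumOfRegular (directSum (Cgroup 2) H))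
    (A : Subgroup (Equiv.Perm (Fin 2 ⊕ β))) (hA : A ≤ directSum (Cgroup 2) H) :
    Representable 2 A := by
  classical
  obtain ⟨f, rfl, hf⟩ := hH.elim exists_code_of_representable exists_code_of_permIso_K4
  rw [Cgroup_two_eq_top] at hB hA
  obtain ⟨P, hP0, hcover, hunique⟩ :=
    (directSum ⊤ (symmGroup f)).exists_orbit_transversal (.inl 0 : Fin 2 ⊕ β)
  have hP1 : .inl 1 ∉ P := fun hP1 => by
    have hswap := hunique _ (sumCongr_mem_directSum_iff.mpr ⟨Subgroup.mem_top (swap 0 1),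
      one_mem (symmGroup f)⟩) _ hP0 (by simpa using hP1)
    simp at hswap
  obtain ⟨z, hz⟩ : ∃ z, .inr z ∈ P := by
    obtain ⟨y⟩ : Nonempty β := Fintype.card_pos_iff.mp (by omega)
    obtain ⟨π, hπ, hπy⟩ := hcover (.inr y)
    obtain ⟨_, -, τ, -, rfl⟩ := exists_sumCongr_of_mem_directSum hπ
    exact ⟨τ y, hπy⟩
  let p : Fin 2 ⊕ β → Bool := fun a => decide (a ∈ P)
  have hreg : ∀ π ∈ directSum ⊤ (symmGroup f), p ∘ π = p → π = 1 := fun π hπ hπp =>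
    hB.eq_one_of_mapsTo_transversal hcover hunique hπ fun a ha => by
      simpa [p, ha] using congrFun hπp a
  rw [← symmGroup_reprFamily_eq hf (z := z) (by simpa [p]) (by simpa [p]) (by simpa [p]) hA hreg]
  exact representable_two_symmGroup_mem _
end

section
/- For every i ≥ 2, the parallel sum C_i^{(2)}, namely the cyclic subgroup of Equiv.Perm (Fin i ⊕ Fin i) generated by Equiv.sumCongr (finRotate i) (finRotate i) (the permutation acting as the i-cycle simultaneously on both copies of Fin i), is 2-representable. -/
/-! Let `c` be the `i`-cycle and write `l j`, `r j` for the two copies of `j`. The symmetry group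
of the indicator of a family of sets is the set of permutations mapping the family into itself.
For the family of all `{l j}`, `{l j, r j}` and `{l j, r j, r (c j)}`, the singletons force such
a permutation to send the left copy to itself by some `π`, the pairs force it to act by the same
`π` on the right copy, and the triples (whose elements are distinct since `c` has no fixed
point) force `π` to commute with `c`. The centralizer of a full cycle is the cyclic group it
generates, so the symmetry group is exactly the parallel sum. -/

open Equiv Function Set Sum

theorem Set.Finite.apply_mem_iff_of_mapsTo {α : Type*} {f : α → α} {s : Set α} (hs : s.Finite)
    (hf : Injective f) (hmaps : MapsTo f s s) (x : α) : f x ∈ s ↔ x ∈ s := by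
  refine ⟨fun hx => ?_, fun hx => hmaps hx⟩
  obtain ⟨y, hy, hyx⟩ := ((hs.injOn_iff_bijOn_of_mapsTo hmaps).mp hf.injOn).surjOn hx
  exact hf hyx ▸ hy

theorem Equiv.Perm.sumCongr_zpow {α β : Type*} (e : Perm α) (f : Perm β) (n : ℤ) :
    (Equiv.sumCongr e f : Perm (α ⊕ β)) ^ n = Equiv.sumCongr (e ^ n) (f ^ n) :=
  (map_zpow (Perm.sumCongrHom α β) (e, f) n).symm

theorem Equiv.Perm.IsCycle.mem_zpowers_of_commute {α : Type*} [Fintype α] [DecidableEq α]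
    {c g : Perm α} (hc : c.IsCycle) (hfix : ∀ x, c x ≠ x) (h : Commute g c) :
    g ∈ Subgroup.zpowers c := by
  obtain ⟨_, hg⟩ := hc.commute_iff.mp h
  rwa [Perm.ofSubtype_subtypePerm _ fun x _ => Perm.mem_support.mpr (hfix x)] at hg

section FamilyIndicator

variable {α : Type*}

noncomputable def familyIndicator (F : Set (Set α)) : (α → Bool) → Fin 2 :=
  open scoped Classical in fun x => if {a | x a} ∈ F then 1 else 0

theorem mem_symmGroup_familyIndicator_iff {F : Set (Set α)} {σ : Perm α} :
    σ ∈ symmGroup (familyIndicator F) ↔ ∀ S, σ '' S ∈ F ↔ S ∈ F := by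
  classical
  have hvalue : ∀ S T : Set α, ((if S ∈ F then 1 else 0 : Fin 2) = if T ∈ F then 1 else 0) ↔
      (S ∈ F ↔ T ∈ F) := by
    intro S T
    split_ifs <;> simp_all
  refine ⟨fun h S => ?_, fun h x => (hvalue _ _).mpr ?_⟩
  · have hx := (hvalue _ _).mp (h fun a => decide (a ∈ σ '' S))
    simp only [comp_apply, decide_eq_true_eq] at hx
    rwa [← preimage_ofPred_eq, ofPred_mem_eq, Equiv.preimage_image, iff_comm] at hx
  · have hx := h (σ ⁻¹' {a | x a})
    rw [Equiv.image_preimage] at hx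
    exact hx.symm

theorem mem_symmGroup_familyIndicator_iff_mapsTo [Finite α] {F : Set (Set α)} {σ : Perm α} :
    σ ∈ symmGroup (familyIndicator F) ↔ MapsTo (σ '' ·) F F := by
  rw [mem_symmGroup_familyIndicator_iff]
  exact ⟨fun h S => (h S).mpr, fun h =>
    F.toFinite.apply_mem_iff_of_mapsTo (image_injective.mpr σ.injective) h⟩

end FamilyIndicator

section CycleFamily

variable {β : Type*}

def cycleShapes (c : Perm β) (j : β) : Set (Set (β ⊕ β)) :=
  {{inl j}, {inl j, inr j}, {inl j, inr j, inr (c j)}}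

def cycleFamily (c : Perm β) : Set (Set (β ⊕ β)) :=
  {S | ∃ j, S ∈ cycleShapes c j}

variable {c : Perm β}

theorem exists_inl_of_singleton_mem_cycleFamily {a : β ⊕ β} (h : {a} ∈ cycleFamily c) :
    ∃ k, a = inl k := by
  obtain ⟨k, h⟩ := h
  have hk : inl k ∈ ({a} : Set (β ⊕ β)) := by rcases h with h | h | (h : _ = _) <;> simp [h]
  exact ⟨k, (mem_singleton_iff.mp hk).symm⟩

theorem eq_of_inl_mem_of_mem_cycleShapes {S : Set (β ⊕ β)} {a k : β} (ha : inl a ∈ S)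
    (h : S ∈ cycleShapes c k) : a = k := by
  rcases h with rfl | rfl | rfl <;> simpa using ha

theorem eq_inr_of_pair_mem_cycleFamily {a : β} {b : β ⊕ β} (h : {inl a, b} ∈ cycleFamily c)
    (hb : b ≠ inl a) : b = inr a := by
  obtain ⟨k, h⟩ := h
  obtain rfl := eq_of_inl_mem_of_mem_cycleShapes (mem_insert _ _) h
  rcases h with h | h | (h : _ = _)
  · have hbS : b ∈ ({inl a, b} : Set (β ⊕ β)) := by simp
    simp [h, hb] at hbS
  all_goals
    have haS : inr a ∈ ({inl a, b} : Set (β ⊕ β)) := by simp [h]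
    simpa [eq_comm] using haS

theorem eq_inr_of_triple_mem_cycleFamily {a : β} {b : β ⊕ β}
    (h : {inl a, inr a, b} ∈ cycleFamily c) (hl : b ≠ inl a) (hr : b ≠ inr a) :
    b = inr (c a) := by
  obtain ⟨k, h⟩ := h
  obtain rfl := eq_of_inl_mem_of_mem_cycleShapes (mem_insert _ _) h
  have hbS : b ∈ ({inl a, inr a, b} : Set (β ⊕ β)) := by simp
  rcases h with h | h | (h : _ = _) <;> simp [h, hl, hr] at hbS
  exact hbS

theorem exists_eq_sumCongr_of_mapsTo_cycleFamily [Finite β] (hfix : ∀ x, c x ≠ x)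
    {σ : Perm (β ⊕ β)} (h : MapsTo (σ '' ·) (cycleFamily c) (cycleFamily c)) :
    ∃ π : Perm β, Commute π c ∧ σ = Equiv.sumCongr π π := by
  have hl : ∀ j, ∃ k, σ (inl j) = inl k := fun j =>
    exists_inl_of_singleton_mem_cycleFamily <| by
      simpa using h (⟨j, Or.inl rfl⟩ : {inl j} ∈ cycleFamily c)
  choose π hπ using hl
  have hr : ∀ j, σ (inr j) = inr (π j) := fun j => by
    refine eq_inr_of_pair_mem_cycleFamily (c := c) ?_ ?_
    · simpa [image_insert_eq, hπ] using
        h (⟨j, Or.inr (Or.inl rfl)⟩ : {inl j, inr j} ∈ cycleFamily c)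
    · rw [← hπ]
      exact σ.injective.ne Sum.inr_ne_inl
  have hcomm : ∀ j, π (c j) = c (π j) := fun j => by
    have hmem : σ '' {inl j, inr j, inr (c j)} ∈ cycleFamily c := h ⟨j, Or.inr (Or.inr rfl)⟩
    rw [image_insert_eq, image_insert_eq, image_singleton, hπ, hr j] at hmem
    have hne_inl : σ (inr (c j)) ≠ inl (π j) := hπ j ▸ σ.injective.ne Sum.inr_ne_inl
    have hne_inr : σ (inr (c j)) ≠ inr (π j) := hr j ▸ σ.injective.ne (inr_injective.ne (hfix j))
    have hrc := eq_inr_of_triple_mem_cycleFamily hmem hne_inl hne_inr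
    rw [hr] at hrc
    exact inr_injective hrc
  have hinj : Injective π := fun a b hab => inl_injective (σ.injective (by rw [hπ, hπ, hab]))
  refine ⟨.ofBijective π (Finite.injective_iff_bijective.mp hinj), Equiv.ext hcomm, ?_⟩
  ext (j | j) <;> simp [hπ, hr]

theorem mapsTo_image_sumCongr_cycleFamily :
    MapsTo (Equiv.sumCongr c c '' ·) (cycleFamily c) (cycleFamily c) := by
  rintro S ⟨j, rfl | rfl | rfl⟩ <;> exact ⟨c j, by simp [cycleShapes, image_insert_eq]⟩

theorem symmGroup_familyIndicator_cycleFamily [Fintype β] [DecidableEq β] (hc : c.IsCycle)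
    (hfix : ∀ x, c x ≠ x) :
    symmGroup (familyIndicator (cycleFamily c)) = Subgroup.zpowers (Equiv.sumCongr c c) := by
  refine le_antisymm (fun σ hσ => ?_) ?_
  · obtain ⟨π, hπc, rfl⟩ := exists_eq_sumCongr_of_mapsTo_cycleFamily hfix
      (mem_symmGroup_familyIndicator_iff_mapsTo.mp hσ)
    obtain ⟨t, rfl⟩ := Subgroup.mem_zpowers_iff.mp (hc.mem_zpowers_of_commute hfix hπc)
    exact ⟨t, Perm.sumCongr_zpow c c t⟩
  · rw [Subgroup.zpowers_le, mem_symmGroup_familyIndicator_iff_mapsTo]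
    exact mapsTo_image_sumCongr_cycleFamily

end CycleFamily

theorem finRotate_apply_ne_self {n : ℕ} (hn : 2 ≤ n) (x : Fin n) : finRotate n x ≠ x := by
  rw [← Perm.mem_support, support_finRotate_of_le hn]
  exact Finset.mem_univ x

theorem parallel_sum_representable (i : ℕ) (hi : 2 ≤ i) :
    Representable 2 (Subgroup.zpowers
      (Equiv.sumCongr (finRotate i) (finRotate i) : Equiv.Perm (Fin i ⊕ Fin i))) :=
  ⟨_, (symmGroup_familyIndicator_cycleFamily (isCycle_finRotate_of_le hi)
    (finRotate_apply_ne_self hi)).symm⟩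
end
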